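/- arXiv:2603.26504 — 6 statements merged into one kernel-verified Lean document; each statement's English description precedes it below -/
import Mathlib

section
/- If an online temporal voting rule is not monotone, then it is not online strategyproof: there exists an instance, a round t, and a voter with some truthful approval profile who can obtain strictly greater satisfaction in round t by submitting false approvals in rounds 1..t. -/
open scoped Classical

noncomputable section

/-- A one-round approval profile: each of the `n` voters approves a finite set of
alternatives (alternatives are natural numbers). -/
abbrev Profile (n : ℕ) := Fin n → Finset ℕ

/-- An online temporal voting rule: given the round index `t` and the (infinite
sequence of) approval profiles, it returns the winning alternative of round `t`.
Online rules only look at rounds `0,…,t`. -/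
abbrev VRule (n : ℕ) := ℕ → (ℕ → Profile n) → ℕ

/-- Replace voter `i`'s approval set in round `t` by `S`, keeping everything else. -/
def updateRound {n : ℕ} (A : ℕ → Profile n) (t : ℕ) (i : Fin n) (S : Finset ℕ) :
    ℕ → Profile n :=
  fun s => if s = t then Function.update (A s) i S else A s

/-- A rule is online if the round-`t` winner only depends on rounds `0,…,t`. -/
def OnlineRule {n : ℕ} (R : VRule n) : Prop :=
  ∀ (t : ℕ) (A B : ℕ → Profile n), (∀ s, s ≤ t → A s = B s) → R t A = R t B

/-- Monotonicity: if `c` wins round `t`, adding `c` to any voter's round-`t`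
approval set keeps `c` the round-`t` winner. -/
def IsMonotone {n : ℕ} (R : VRule n) : Prop :=
  ∀ (A : ℕ → Profile n) (t : ℕ) (i : Fin n),
    R t (updateRound A t i (A t i ∪ {R t A})) = R t A

/-- Online independence of irrelevant alternatives: removing a non-winning
alternative `d` from any single voter's round-`t` approvals keeps the winner. -/
def OIIA {n : ℕ} (R : VRule n) : Prop :=
  ∀ (A : ℕ → Profile n) (t : ℕ) (i : Fin n) (d : ℕ), d ≠ R t A →
    R t (updateRound A t i ((A t i).erase d)) = R t A

/-- Online strategyproofness: fixing previous rounds and the other voters, no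
misreport `S` by voter `i` in round `t` can turn the round-`t` winner from a
(truthfully) unapproved alternative into an approved one. -/
def OSP {n : ℕ} (R : VRule n) : Prop :=
  ∀ (A : ℕ → Profile n) (t : ℕ) (i : Fin n) (S : Finset ℕ),
    R t (updateRound A t i S) ∈ A t i → R t A ∈ A t i

/-- `B` deviates from `A` only in voter `i`'s reports. -/
def Deviation {n : ℕ} (i : Fin n) (A B : ℕ → Profile n) : Prop :=
  ∀ (t : ℕ) (j : Fin n), j ≠ i → B t j = A t j

/-- Satisfaction of the group `G` over rounds `0,…,T-1`: the number of rounds in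
which the winner under the reported profile `B` is approved (in the reference,
e.g. truthful, profile `A`) by some member of `G`. -/
def satAgainst {n : ℕ} (R : VRule n) (B A : ℕ → Profile n) (T : ℕ)
    (G : Finset (Fin n)) : ℕ :=
  ((Finset.range T).filter fun t => ∃ i ∈ G, R t B ∈ A t i).card

/-- (Full) strategyproofness: no unilateral misreport strictly increases a
voter's total satisfaction, measured against their truthful approvals. -/
def SP {n : ℕ} (R : VRule n) : Prop :=
  ∀ (A B : ℕ → Profile n) (i : Fin n) (T : ℕ), Deviation i A B →
    satAgainst R B A T {i} ≤ satAgainst R A A T {i}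

/-- `G` is `ℓ`-cohesive in the first `T` rounds of `A`: in some `ℓ` rounds all
members of `G` approve a common alternative. -/
def Cohesive {n : ℕ} (A : ℕ → Profile n) (T : ℕ) (G : Finset (Fin n)) (ℓ : ℕ) : Prop :=
  ∃ Rs : Finset ℕ, Rs ⊆ Finset.range T ∧ Rs.card = ℓ ∧
    ∀ t ∈ Rs, ∃ c, ∀ i ∈ G, c ∈ A t i

/-- Justified representation. -/
def SatisfiesJR {n : ℕ} (R : VRule n) : Prop :=
  ∀ (A : ℕ → Profile n) (T : ℕ) (G : Finset (Fin n)) (ℓ : ℕ),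
    Cohesive A T G ℓ → min 1 (ℓ * G.card / n) ≤ satAgainst R A A T G

/-- Proportional justified representation. -/
def SatisfiesPJR {n : ℕ} (R : VRule n) : Prop :=
  ∀ (A : ℕ → Profile n) (T : ℕ) (G : Finset (Fin n)) (ℓ : ℕ),
    Cohesive A T G ℓ → ℓ * G.card / n ≤ satAgainst R A A T G

end
/-- If an online temporal voting rule is not monotone, then it is
not online strategyproof. -/
theorem not_monotone_implies_not_OSP {n : ℕ} (R : VRule n)
    (hOnline : OnlineRule R) (hmono : ¬ IsMonotone R) : ¬ OSP R := by
  intro hOSP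
  apply hmono
  intro A t i
  by_contra hne
  set c := R t A with hc
  set S := A t i ∪ {c} with hS
  set A' := updateRound A t i S with hA'
  have hself : updateRound A t i (A t i) = A := by
    funext s
    by_cases h : s = t
    · subst h; simp [updateRound, Function.update_eq_self]
    · simp [updateRound, h]
  have hcmem : c ∉ A t i := by
    intro hmem
    apply hne
    have hSe : S = A t i := by
      rw [hS]; exact Finset.union_eq_left.mpr (by simpa using hmem)
    rw [hA', hSe, hself]
  by_cases hc' : R t A' ∈ A t i
  · exact hcmem (hOSP A t i S hc')
  · -- misreport A t i from truthful A'
    have hA't : A' t i = S := by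
      simp [hA', updateRound]
    have hback : updateRound A' t i (A t i) = A := by
      funext s
      by_cases h : s = t
      · subst h
        simp [hA', updateRound, Function.update_idem, Function.update_eq_self]
      · simp [hA', updateRound, h]
    have hmem : R t (updateRound A' t i (A t i)) ∈ A' t i := by
      rw [hback, hA't, hS, ← hc]
      exact Finset.mem_union_right _ (Finset.mem_singleton_self c)
    have := hOSP A' t i (A t i) hmem
    rw [hA't, hS] at this
    rcases Finset.mem_union.mp this with h | h
    · exact hc' h
    · exact hne (Finset.mem_singleton.mp h)
end

section
/- Any online temporal voting rule satisfying online independence of irrelevant alternatives (OIIA) is online strategyproof (OSP). -/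
open scoped Classical

section Aux

lemma updateRound_apply {n : ℕ} (A : ℕ → Profile n) (t : ℕ) (i : Fin n) (S : Finset ℕ) :
    (updateRound A t i S) t i = S := by
  simp [updateRound]

lemma updateRound_updateRound {n : ℕ} (A : ℕ → Profile n) (t : ℕ) (i : Fin n)
    (S X : Finset ℕ) :
    updateRound (updateRound A t i S) t i X = updateRound A t i X := by
  funext s
  by_cases h : s = t <;> simp [updateRound, h, Function.update_idem]

lemma updateRound_self {n : ℕ} (A : ℕ → Profile n) (t : ℕ) (i : Fin n) :
    updateRound A t i (A t i) = A := by
  funext s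
  by_cases h : s = t <;> simp [updateRound, h]

lemma erase_many {n : ℕ} (R : VRule n) (hR : OIIA R) (A : ℕ → Profile n) (t : ℕ)
    (i : Fin n) :
    ∀ D : Finset ℕ, R t A ∉ D → R t (updateRound A t i (A t i \ D)) = R t A := by
  intro D
  induction D using Finset.induction_on with
  | empty => intro _; rw [Finset.sdiff_empty, updateRound_self]
  | @insert d D hd ih =>
    intro hD
    have hdw : d ≠ R t A := fun h => hD (by rw [h]; exact Finset.mem_insert_self _ _)
    have hD' : R t A ∉ D := fun h => hD (Finset.mem_insert_of_mem h)
    have h1 := ih hD'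
    set A' := updateRound A t i (A t i \ D) with hA'
    have h2 := hR A' t i d (by rw [h1]; exact hdw)
    have hset : (A' t i).erase d = A t i \ insert d D := by
      rw [hA', updateRound_apply]
      ext x
      simp only [Finset.mem_erase, Finset.mem_sdiff, Finset.mem_insert]
      tauto
    rw [hset, hA', updateRound_updateRound, h1] at h2
    exact h2

end Aux

/-- Any online temporal voting rule satisfying OIIA is online
strategyproof. -/
theorem oiia_implies_osp {n : ℕ} (R : VRule n) (hR : OIIA R) : OSP R := by
  intro A t i S hmem
  by_contra hw
  set B := updateRound A t i S with hB
  set w := R t A with hwdef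
  set w' := R t B with hw'def
  have hww' : w ≠ w' := fun h => hw (h ▸ hmem)
  -- reduce truthful side to {w'}
  have hA1 : R t (updateRound A t i {w'}) = w := by
    have := erase_many R hR A t i ((A t i).erase w') (fun h => hw (Finset.mem_of_mem_erase h))
    have hset : A t i \ (A t i).erase w' = {w'} := by
      ext x
      simp only [Finset.mem_sdiff, Finset.mem_erase, Finset.mem_singleton]
      constructor
      · rintro ⟨hx, hx2⟩
        by_contra hne
        exact hx2 ⟨hne, hx⟩
      · rintro rfl
        exact ⟨hmem, fun h => h.1 rfl⟩
    rwa [hset] at this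
  -- reduce misreport side
  have hBi : B t i = S := updateRound_apply A t i S
  have hB1 := erase_many R hR B t i (S.erase w') (fun h => (Finset.mem_erase.mp h).1 rfl)
  rw [hBi] at hB1
  have hBB : ∀ Y, updateRound B t i Y = updateRound A t i Y := fun Y =>
    updateRound_updateRound A t i S Y
  by_cases hS : w' ∈ S
  · have hset : S \ S.erase w' = {w'} := by
      ext x
      simp only [Finset.mem_sdiff, Finset.mem_erase, Finset.mem_singleton]
      constructor
      · rintro ⟨hx, hx2⟩
        by_contra hne
        exact hx2 ⟨hne, hx⟩
      · rintro rfl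
        exact ⟨hS, fun h => h.1 rfl⟩
    rw [hset, hBB] at hB1
    exact hww' (hA1 ▸ hB1 ▸ rfl)
  · have hset : S \ S.erase w' = ∅ := by
      ext x
      simp only [Finset.mem_sdiff, Finset.mem_erase, Finset.notMem_empty, iff_false]
      rintro ⟨hx, hx2⟩
      exact hx2 ⟨fun h => hS (h ▸ hx), hx⟩
    rw [hset, hBB] at hB1
    -- from the {w'} profile, erase w' (winner is w ≠ w')
    have h3 := hR (updateRound A t i {w'}) t i w' (by rw [hA1]; exact fun h => hww' h.symm)
    rw [updateRound_apply, Finset.erase_singleton, updateRound_updateRound, hA1] at h3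
    rw [hB1] at h3
    exact hww' h3.symm
end

section
/- OIIA is not a necessary condition for OSP: there exists a deterministic online voting rule that is (fully) strategyproof, and hence OSP, but violates OIIA. -/
open scoped Classical

noncomputable def fsel (S : Finset ℕ) : ℕ :=
  if S = ({0,1,2} : Finset ℕ) then 2 else if h : S.Nonempty then S.min' h else 0

lemma fsel_mem {S : Finset ℕ} (h : S.Nonempty) : fsel S ∈ S := by
  by_cases h1 : S = ({0,1,2} : Finset ℕ)
  · subst h1; rw [fsel, if_pos rfl]; decide
  · rw [fsel, if_neg h1, dif_pos h]; exact S.min'_mem h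

/-- OIIA is not necessary for OSP: there is a deterministic online
voting rule that is (fully) strategyproof, and hence OSP, but violates OIIA. -/
theorem osp_does_not_imply_oiia (n : ℕ) (hn : 0 < n) :
    ∃ R : VRule n, OnlineRule R ∧ SP R ∧ OSP R ∧ ¬ OIIA R := by
  set v0 : Fin n := ⟨0, hn⟩ with hv0
  refine ⟨fun t A => fsel (A t v0), ?_, ?_, ?_, ?_⟩
  · intro t A B h
    show fsel (A t v0) = fsel (B t v0)
    rw [h t le_rfl]
  · intro A B i T hdev
    apply Finset.card_le_card
    intro t ht
    simp only [Finset.mem_filter, Finset.mem_singleton, exists_eq_left] at ht ⊢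
    refine ⟨ht.1, ?_⟩
    have hmem := ht.2
    by_cases hji : i = v0
    · subst hji
      exact fsel_mem ⟨_, hmem⟩
    · rwa [hdev t v0 (fun h => hji h.symm)] at hmem
  · intro A t i S hmem
    have hmem' : fsel ((updateRound A t i S) t v0) ∈ A t i := hmem
    show fsel (A t v0) ∈ A t i
    by_cases hi : i = v0
    · subst hi
      exact fsel_mem ⟨_, hmem'⟩
    · have heq : (updateRound A t i S) t v0 = A t v0 := by
        simp [updateRound, Function.update_of_ne (fun h => hi h.symm)]
      rwa [heq] at hmem'
  · intro hOIIA
    have h := hOIIA (fun _ _ => ({0,1,2} : Finset ℕ)) 0 v0 1 (by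
      show (1:ℕ) ≠ fsel {0,1,2}
      rw [fsel, if_pos rfl]; decide)
    have h2 : ((({0,1,2} : Finset ℕ)).erase 1) = ({0,2} : Finset ℕ) := by decide
    simp only [updateRound, if_pos rfl, if_true, Function.update_self, h2] at h
    have h3 : fsel ({0,2} : Finset ℕ) = 0 := by
      rw [fsel, if_neg (by decide), dif_pos (by decide)]
      decide
    have h4 : fsel ({0,1,2} : Finset ℕ) = 2 := by
      rw [fsel, if_pos rfl]
    rw [h3, h4] at h
    exact absurd h (by decide)
end

section
/- GreedyJR satisfies justified representation (JR): for every instance and every ℓ-cohesive group G with floor(ℓ·|G|/n) ≥ 1, the group's satisfaction under GreedyJR is at least 1. -/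
open scoped Classical

noncomputable section

/-- Score of alternative `c`: sum of `max 0 (weight)` over approving voters. -/
def wamScore {n : ℕ} (w : Fin n → ℝ) (Ap : Profile n) (c : ℕ) : ℝ :=
  ∑ i, if c ∈ Ap i then max 0 (w i) else 0

/-- The winner of a Weighted Approval Method round: the lexicographically first
alternative of `Ct` with maximum score. -/
def wamWinner {n : ℕ} (w : Fin n → ℝ) (Ap : Profile n) (Ct : Finset ℕ) : ℕ :=
  sInf {c : ℕ | c ∈ Ct ∧ ∀ c' ∈ Ct, wamScore w Ap c' ≤ wamScore w Ap c}

/-- The voters' weights at the start of round `t`, for a WAM with weight-update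
functions `f` (for satisfied voters) and `g` (for unsatisfied voters), initial
weights `α0`, alternative sets `C` and approval profiles `A`. -/
def wamW {n : ℕ} (f g : ℝ → ℝ) (α0 : Fin n → ℝ) (C : ℕ → Finset ℕ)
    (A : ℕ → Profile n) : ℕ → Fin n → ℝ
  | 0 => α0
  | t + 1 => fun i =>
      if wamWinner (wamW f g α0 C A t) (A t) (C t) ∈ A t i then
        f (wamW f g α0 C A t i)
      else g (wamW f g α0 C A t i)

/-- The Weighted Approval Method as an online voting rule. -/
def wamRule {n : ℕ} (f g : ℝ → ℝ) (α0 : Fin n → ℝ) (C : ℕ → Finset ℕ) : VRule n :=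
  fun t A => wamWinner (wamW f g α0 C A t) (A t) (C t)

/-- GreedyJR: the WAM with `f = 0`, `g = id` and all initial weights `1`. -/
def greedyJR {n : ℕ} (C : ℕ → Finset ℕ) : VRule n :=
  wamRule (fun _ => 0) id (fun _ => 1) C

end
/-- GreedyJR satisfies justified representation: every `ℓ`-cohesive
group `G` with `⌊ℓ·|G|/n⌋ ≥ 1` has satisfaction at least `1`. -/
theorem greedyJR_satisfies_JR {n : ℕ} (hn : 0 < n) (C : ℕ → Finset ℕ)
    (A : ℕ → Profile n) (hA : ∀ t i, A t i ⊆ C t ∧ (A t i).Nonempty) (T : ℕ)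
    (G : Finset (Fin n)) (ℓ : ℕ) (hcoh : Cohesive A T G ℓ)
    (hbig : 1 ≤ ℓ * G.card / n) :
    1 ≤ satAgainst (greedyJR C) A A T G := by
  classical
  -- basic consequences of `hbig`
  have hnle : n ≤ ℓ * G.card := (Nat.one_le_div_iff hn).mp hbig
  have hGpos : 0 < G.card := by
    refine Nat.pos_of_ne_zero fun h0 => ?_
    rw [h0, Nat.mul_zero] at hnle
    omega
  by_contra hcon
  push_neg at hcon
  have hsat0 : satAgainst (greedyJR C) A A T G = 0 := by omega
  -- no round's winner is approved by any member of G
  have hns : ∀ t < T, ∀ i ∈ G, (greedyJR C) t A ∉ A t i := by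
    intro t ht i hi hmem
    have hmemf : t ∈ (Finset.range T).filter
        (fun t => ∃ i ∈ G, (greedyJR C) t A ∈ A t i) := by
      simp only [Finset.mem_filter, Finset.mem_range]
      exact ⟨ht, i, hi, hmem⟩
    have : ((Finset.range T).filter
        (fun t => ∃ i ∈ G, (greedyJR C) t A ∈ A t i)).card = 0 := hsat0
    rw [Finset.card_eq_zero] at this
    rw [this] at hmemf
    exact absurd hmemf (Finset.notMem_empty t)
  -- notation
  set W : ℕ → Fin n → ℝ := wamW (fun _ => 0) id (fun _ => 1) C A with hW
  have hWzero : ∀ i, W 0 i = 1 := fun i => rfl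
  have hWsucc : ∀ t i, W (t + 1) i =
      if wamWinner (W t) (A t) (C t) ∈ A t i then 0 else W t i := by
    intro t i; rfl
  have hrule : ∀ t, (greedyJR C) t A = wamWinner (W t) (A t) (C t) := fun t => rfl
  -- weights are 0 or 1
  have h01 : ∀ t i, W t i = 0 ∨ W t i = 1 := by
    intro t
    induction t with
    | zero => intro i; exact Or.inr rfl
    | succ t ih =>
        intro i
        rw [hWsucc]
        split
        · exact Or.inl rfl
        · exact ih i
  -- members of G are never satisfied, so they keep weight 1
  have hG1 : ∀ t ≤ T, ∀ i ∈ G, W t i = 1 := by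
    intro t
    induction t with
    | zero => intro _ i _; exact hWzero i
    | succ t ih =>
        intro ht i hi
        rw [hWsucc]
        have hlt : t < T := Nat.lt_of_succ_le ht
        have hnot : wamWinner (W t) (A t) (C t) ∉ A t i := by
          rw [← hrule]; exact hns t hlt i hi
        rw [if_neg hnot]
        exact ih (Nat.le_of_succ_le ht) i hi
  -- the set of still-unsatisfied voters
  set U : ℕ → Finset (Fin n) := fun t => Finset.univ.filter (fun i => W t i = 1)
    with hU
  -- winner properties
  have hwin : ∀ t, wamWinner (W t) (A t) (C t) ∈ C t ∧
      ∀ c' ∈ C t, wamScore (W t) (A t) c' ≤ wamScore (W t) (A t)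
        (wamWinner (W t) (A t) (C t)) := by
    intro t
    have hCne : (C t).Nonempty := by
      obtain ⟨a, ha⟩ := (hA t ⟨0, hn⟩).2
      exact ⟨a, (hA t ⟨0, hn⟩).1 ha⟩
    obtain ⟨b, hb, hbmax⟩ := Finset.exists_max_image (C t)
      (wamScore (W t) (A t)) hCne
    have hne : {c : ℕ | c ∈ C t ∧ ∀ c' ∈ C t,
        wamScore (W t) (A t) c' ≤ wamScore (W t) (A t) c}.Nonempty :=
      ⟨b, hb, hbmax⟩
    exact Nat.sInf_mem hne
  -- score of any alternative equals the number of unsatisfied approvers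
  have hscore : ∀ t c, wamScore (W t) (A t) c =
      ((U t).filter (fun i => c ∈ A t i)).card := by
    intro t c
    have : ∀ i : Fin n, (if c ∈ A t i then max 0 (W t i) else 0) =
        if (W t i = 1 ∧ c ∈ A t i) then (1 : ℝ) else 0 := by
      intro i
      rcases h01 t i with h | h <;> rw [h] <;> split_ifs with h1 h2 <;>
        simp_all
    rw [wamScore]
    simp only [this]
    rw [Finset.sum_boole]
    congr 1
    rw [hU]
    rw [Finset.filter_filter]
  -- one greedy round removes the winner's unsatisfied approvers from U
  have hUsucc : ∀ t, U (t + 1) =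
      (U t).filter (fun i => wamWinner (W t) (A t) (C t) ∉ A t i) := by
    intro t
    ext i
    simp only [hU, Finset.mem_filter, Finset.mem_univ, true_and, hWsucc]
    constructor
    · intro h
      by_cases hm : wamWinner (W t) (A t) (C t) ∈ A t i
      · rw [if_pos hm] at h; norm_num at h
      · rw [if_neg hm] at h; exact ⟨h, hm⟩
    · intro ⟨h1, h2⟩
      rw [if_neg h2]; exact h1
  -- in a cohesive round (before T), at least |G| voters get satisfied
  have hstep : ∀ t < T, (∃ c, ∀ i ∈ G, c ∈ A t i) →
      (U (t + 1)).card + G.card ≤ (U t).card := by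
    intro t ht ⟨c, hc⟩
    have hcC : c ∈ C t := by
      obtain ⟨i, hi⟩ := Finset.card_pos.mp hGpos
      exact (hA t i).1 (hc i hi)
    -- score of c is at least |G|
    have hGsub : G ⊆ (U t).filter (fun i => c ∈ A t i) := by
      intro i hi
      simp only [hU, Finset.mem_filter, Finset.mem_univ, true_and]
      exact ⟨hG1 t (Nat.le_of_lt ht) i hi, hc i hi⟩
    have h1 : G.card ≤ ((U t).filter (fun i => c ∈ A t i)).card :=
      Finset.card_le_card hGsub
    have h2 : wamScore (W t) (A t) c ≤ wamScore (W t) (A t)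
        (wamWinner (W t) (A t) (C t)) := (hwin t).2 c hcC
    rw [hscore, hscore] at h2
    have h3 : G.card ≤
        ((U t).filter (fun i => wamWinner (W t) (A t) (C t) ∈ A t i)).card := by
      have := h2
      exact_mod_cast le_trans (Nat.cast_le.mpr h1) this
    have h4 : ((U t).filter (fun i => wamWinner (W t) (A t) (C t) ∈ A t i)).card
        + ((U t).filter (fun i => wamWinner (W t) (A t) (C t) ∉ A t i)).card
        = (U t).card :=
      Finset.card_filter_add_card_filter_not
        (p := fun i => wamWinner (W t) (A t) (C t) ∈ A t i)
    rw [hUsucc]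
    omega
  -- U never grows
  have hmono : ∀ t, (U (t + 1)).card ≤ (U t).card := by
    intro t
    rw [hUsucc]
    exact Finset.card_le_card (Finset.filter_subset _ _)
  obtain ⟨Rs, hRsub, hRcard, hRcoh⟩ := hcoh
  -- main invariant
  have hinv : ∀ t ≤ T, (U t).card + G.card * (Rs ∩ Finset.range t).card ≤ n := by
    intro t
    induction t with
    | zero =>
        intro _
        simp only [Finset.range_zero, Finset.inter_empty, Finset.card_empty,
          Nat.mul_zero, Nat.add_zero]
        calc (U 0).card ≤ Finset.univ.card := Finset.card_le_card
              (Finset.filter_subset _ _)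
          _ = n := Finset.card_univ.trans (Fintype.card_fin n)
    | succ t ih =>
        intro ht
        have ht' : t < T := Nat.lt_of_succ_le ht
        have ihh := ih (Nat.le_of_lt ht')
        by_cases htR : t ∈ Rs
        · have hco := hRcoh t htR
          have hst := hstep t ht' hco
          have hins : Rs ∩ Finset.range (t + 1) =
              insert t (Rs ∩ Finset.range t) := by
            ext s
            simp only [Finset.mem_inter, Finset.mem_range, Finset.mem_insert]
            constructor
            · rintro ⟨hs, hlt⟩
              rcases Nat.lt_succ_iff_lt_or_eq.mp hlt with h | h
              · exact Or.inr ⟨hs, h⟩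
              · exact Or.inl h
            · rintro (h | ⟨hs, hlt⟩)
              · subst h; exact ⟨htR, Nat.lt_succ_self _⟩
              · exact ⟨hs, Nat.lt_succ_of_lt hlt⟩
          have hni : t ∉ Rs ∩ Finset.range t := by
            simp [Finset.mem_inter]
          rw [hins, Finset.card_insert_of_notMem hni]
          have := hmono t
          nlinarith [hst, ihh]
        · have hsame : Rs ∩ Finset.range (t + 1) = Rs ∩ Finset.range t := by
            ext s
            simp only [Finset.mem_inter, Finset.mem_range]
            constructor
            · rintro ⟨hs, hlt⟩
              rcases Nat.lt_succ_iff_lt_or_eq.mp hlt with h | h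
              · exact ⟨hs, h⟩
              · exact absurd (h ▸ hs) htR
            · rintro ⟨hs, hlt⟩
              exact ⟨hs, Nat.lt_succ_of_lt hlt⟩
          rw [hsame]
          have := hmono t
          omega
  -- finish: G ⊆ U T, so |U T| ≥ 1, but the invariant forces |U T| + ℓ|G| ≤ n
  have hRT : Rs ∩ Finset.range T = Rs :=
    Finset.inter_eq_left.mpr hRsub
  have hfin := hinv T le_rfl
  rw [hRT, hRcard] at hfin
  have hGU : G ⊆ U T := by
    intro i hi
    simp only [hU, Finset.mem_filter, Finset.mem_univ, true_and]
    exact hG1 T le_rfl i hi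
  have : 0 < (U T).card := Finset.card_pos.mpr
    ((Finset.card_pos.mp hGpos).imp (fun i hi => hGU hi))
  nlinarith [hnle, hfin, this]
end

section
/- GreedyJR is not strategyproof: there is an instance with 5 voters and 2 rounds where one voter strictly increases total satisfaction by misreporting in round 1. -/
open scoped Classical

/-!
GreedyJR keeps a voter's weight at `1` until the first round whose winner they approve and
then drops it to `0`, so each round goes to the alternative approved by the most
not-yet-satisfied voters. Voter `v₃` truthfully approves the round-1 winner `c₁`, which
still wins without `v₃`'s support; hiding that approval keeps `v₃` unsatisfied, and in
round 2 `v₃`'s remaining weight lifts `c₂`, which `v₃` approves, above the tie between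
`c₂` and `c₃` that truthful reporting produces and that `c₃` wins.
-/

open Finset

noncomputable section GreedyJR

variable {n : ℕ}

theorem wamWinner_eq_of_le_of_lt {w : Fin n → ℝ} {Ap : Profile n} {Ct : Finset ℕ} {c : ℕ}
    (hc : c ∈ Ct) (hle : ∀ c' ∈ Ct, wamScore w Ap c' ≤ wamScore w Ap c)
    (hlt : ∀ c' ∈ Ct, c' < c → wamScore w Ap c' < wamScore w Ap c) :
    wamWinner w Ap Ct = c :=
  IsLeast.csInf_eq ⟨⟨hc, hle⟩, fun _ ⟨hm, hmax⟩ =>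
    not_lt.1 fun hlt' => (hlt _ hm hlt').not_ge (hmax c hc)⟩

theorem wamScore_indicator (U : Finset (Fin n)) (Ap : Profile n) (c : ℕ) :
    wamScore (fun i => if i ∈ U then 1 else 0) Ap c = #{i ∈ U | c ∈ Ap i} := by
  simp only [wamScore, apply_ite (max (0 : ℝ)), max_self, max_eq_right, zero_le_one]
  rw [← sum_filter, sum_boole, filter_filter]
  congr 2
  ext i
  simp [and_comm]

variable (C : ℕ → Finset ℕ) (A : ℕ → Profile n)

def greedyJRUnsatisfied : ℕ → Finset (Fin n)
  | 0 => univ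
  | t + 1 => {i ∈ greedyJRUnsatisfied t | greedyJR C t A ∉ A t i}

def greedyJRScore (t c : ℕ) : ℕ :=
  #{i ∈ greedyJRUnsatisfied C A t | c ∈ A t i}

theorem wamW_greedyJR (t : ℕ) :
    wamW (fun _ => 0) id (fun _ => 1) C A t =
      fun i => if i ∈ greedyJRUnsatisfied C A t then 1 else 0 := by
  induction t with
  | zero => simp [wamW, greedyJRUnsatisfied]
  | succ t ih =>
    funext i
    change (if greedyJR C t A ∈ A t i then (0 : ℝ) else id (wamW _ _ _ C A t i)) = _
    rw [ih]
    simp only [greedyJRUnsatisfied, mem_filter, id]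
    split_ifs <;> simp_all

theorem greedyJR_eq_of_forall_score {t c : ℕ} (hc : c ∈ C t)
    (hle : ∀ c' ∈ C t, greedyJRScore C A t c' ≤ greedyJRScore C A t c)
    (hlt : ∀ c' ∈ C t, c' < c → greedyJRScore C A t c' < greedyJRScore C A t c) :
    greedyJR C t A = c := by
  have hscore (c' : ℕ) : wamScore (wamW (fun _ => 0) id (fun _ => 1) C A t) (A t) c' =
      greedyJRScore C A t c' := by
    rw [wamW_greedyJR, wamScore_indicator, greedyJRScore]
  refine wamWinner_eq_of_le_of_lt hc (fun c' hc' => ?_) (fun c' hc' h => ?_)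
  · simpa only [hscore, Nat.cast_le] using hle c' hc'
  · simpa only [hscore, Nat.cast_lt] using hlt c' hc' h

end GreedyJR

theorem deviation_updateRound {n : ℕ} (A : ℕ → Profile n) (t : ℕ) (i : Fin n)
    (S : Finset ℕ) : Deviation i A (updateRound A t i S) := by
  intro s j hj
  unfold updateRound
  split_ifs <;> simp [hj]

theorem updateRound_of_ne {n : ℕ} (A : ℕ → Profile n) {s t : ℕ} (i : Fin n) (S : Finset ℕ)
    (h : s ≠ t) : updateRound A t i S s = A s := if_neg h

theorem satAgainst_singleton {n : ℕ} (R : VRule n) (B A : ℕ → Profile n) (T : ℕ) (i : Fin n) :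
    satAgainst R B A T {i} = ∑ t ∈ range T, if R t B ∈ A t i then 1 else 0 := by
  rw [satAgainst, card_filter]
  simp only [mem_singleton, exists_eq_left]

namespace GreedyJRNotSP

/-- The paper's alternatives `c₁,…,c₄`, with `c₂` and `c₃` swapped so that the rule's
smallest-alternative tie-breaking favours the paper's `c₃`. Rounds and voters are indexed
from `0`, so the manipulating voter `v₃` is voter `2`. -/
def alternatives : ℕ → Finset ℕ := fun _ => {1, 2, 3, 4}

def truthful : ℕ → Profile 5 := fun t =>
  if t = 0 then ![{1}, {1}, {1}, {3}, {2}] else ![{1}, {1}, {3}, {3}, {2}]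

def misreport : ℕ → Profile 5 := updateRound truthful 0 2 {4}

theorem greedyJR_truthful_zero : greedyJR alternatives 0 truthful = 1 :=
  greedyJR_eq_of_forall_score _ _ (by decide) (by decide) (by decide)

theorem greedyJR_truthful_one : greedyJR alternatives 1 truthful = 2 := by
  refine greedyJR_eq_of_forall_score _ _ (by decide) ?_ ?_ <;>
    simp only [greedyJRScore, greedyJRUnsatisfied, greedyJR_truthful_zero] <;> decide

theorem greedyJR_misreport_zero : greedyJR alternatives 0 misreport = 1 :=
  greedyJR_eq_of_forall_score _ _ (by decide) (by decide) (by decide)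

theorem greedyJR_misreport_one : greedyJR alternatives 1 misreport = 3 := by
  refine greedyJR_eq_of_forall_score _ _ (by decide) ?_ ?_ <;>
    simp only [greedyJRScore, greedyJRUnsatisfied, greedyJR_misreport_zero] <;> decide

theorem satAgainst_truthful :
    satAgainst (greedyJR alternatives) truthful truthful 2 {2} = 1 := by
  rw [satAgainst_singleton, sum_range_succ, sum_range_one, greedyJR_truthful_zero,
    greedyJR_truthful_one]
  decide

theorem satAgainst_misreport :
    satAgainst (greedyJR alternatives) misreport truthful 2 {2} = 2 := by
  rw [satAgainst_singleton, sum_range_succ, sum_range_one, greedyJR_misreport_zero,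
    greedyJR_misreport_one]
  decide

end GreedyJRNotSP

/-- GreedyJR is not strategyproof: in an instance with 5 voters,
2 rounds and alternatives `{1,2,3,4}` every round, some voter strictly increases
total satisfaction by misreporting in round 1 only. -/
theorem greedyJR_not_SP :
    ∃ (A B : ℕ → Profile 5) (i : Fin 5), Deviation i A B ∧
      (∀ t, t ≠ 0 → B t = A t) ∧
      satAgainst (greedyJR fun _ => ({1, 2, 3, 4} : Finset ℕ)) A A 2 {i} <
        satAgainst (greedyJR fun _ => ({1, 2, 3, 4} : Finset ℕ)) B A 2 {i} := by
  open GreedyJRNotSP in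
  exact ⟨truthful, misreport, 2, deviation_updateRound _ _ _ _,
    fun _ ht => updateRound_of_ne _ _ _ ht,
    satAgainst_truthful.trans_lt (by decide) |>.trans_eq satAgainst_misreport.symm⟩
end

section
/- Temporal Serial Dictator does not satisfy weak JR: there is an instance with T = 2 rounds in which a 1-cohesive (indeed 2-cohesive) group of n/2 voters with floor(2·(n/2)/n) = 1 receives satisfaction 0. -/
open scoped Classical

noncomputable section

/-- Temporal Serial Dictator: in round `t`, the winner is chosen (by the fixed
choice function `χ`) from the approval set of voter `σ(t mod n)`. -/
def tsd {n : ℕ} (hn : 0 < n) (σ : Equiv.Perm (Fin n)) (χ : Finset ℕ → ℕ) : VRule n :=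
  fun t A => χ (A t (σ ⟨t % n, Nat.mod_lt t hn⟩))

end

section

variable {n : ℕ}

theorem Fin.card_filter_le_val (m : ℕ) :
    (Finset.univ.filter fun i : Fin n => m ≤ (i : ℕ)).card = n - m := by
  have hsplit := Finset.card_filter_add_card_filter_not
    (s := (Finset.univ : Finset (Fin n))) (fun i => (i : ℕ) < m)
  simp only [Fin.card_filter_val_lt, not_lt, Finset.card_univ, Fintype.card_fin] at hsplit
  omega

theorem satAgainst_eq_zero {R : VRule n} {B A : ℕ → Profile n} {T : ℕ} {G : Finset (Fin n)}
    (h : ∀ t < T, ∀ i ∈ G, R t B ∉ A t i) : satAgainst R B A T G = 0 := by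
  simp only [satAgainst, Finset.card_eq_zero, Finset.filter_eq_empty_iff, Finset.mem_range]
  rintro t ht ⟨i, hi, hwin⟩
  exact h t ht i hi hwin

theorem cohesive_range {A : ℕ → Profile n} {T : ℕ} {G : Finset (Fin n)}
    (h : ∀ t < T, ∃ c, ∀ i ∈ G, c ∈ A t i) : Cohesive A T G T :=
  ⟨Finset.range T, subset_rfl, Finset.card_range T, fun t ht => h t (Finset.mem_range.mp ht)⟩

theorem satAgainst_tsd_eq_zero (hn : 0 < n) (σ : Equiv.Perm (Fin n)) {χ : Finset ℕ → ℕ}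
    (hχ : ∀ S : Finset ℕ, S.Nonempty → χ S ∈ S) {A : ℕ → Profile n} {T : ℕ}
    {G : Finset (Fin n)} (hA : ∀ t < T, (A t (σ ⟨t % n, Nat.mod_lt t hn⟩)).Nonempty)
    (hdisj : ∀ t < T, ∀ i ∈ G, Disjoint (A t (σ ⟨t % n, Nat.mod_lt t hn⟩)) (A t i)) :
    satAgainst (tsd hn σ χ) A A T G = 0 :=
  satAgainst_eq_zero fun t ht i hi =>
    Finset.disjoint_left.mp (hdisj t ht i hi) (hχ _ (hA t ht))

def splitProfile (k : ℕ) : ℕ → Profile n :=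
  fun _ i => if (i : ℕ) < k then {0} else {1}

theorem splitProfile_of_lt {k t : ℕ} {i : Fin n} (hi : (i : ℕ) < k) :
    splitProfile k t i = {0} :=
  if_pos hi

theorem splitProfile_of_le {k t : ℕ} {i : Fin n} (hi : k ≤ (i : ℕ)) :
    splitProfile k t i = {1} :=
  if_neg (Nat.not_lt.mpr hi)

theorem splitProfile_nonempty (k t : ℕ) (i : Fin n) : (splitProfile k t i).Nonempty := by
  unfold splitProfile
  split_ifs <;> simp

end

/-- Temporal Serial Dictator does not satisfy weak JR: for even
`n ≥ 4` (identity permutation) there is a `T = 2` instance with a `2`-cohesive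
group of `n/2` voters whose JR bound is `1` but whose satisfaction is `0`. -/
theorem tsd_fails_wJR (n : ℕ) (hn : 4 ≤ n) (heven : n % 2 = 0)
    (χ : Finset ℕ → ℕ) (hχ : ∀ S : Finset ℕ, S.Nonempty → χ S ∈ S) :
    ∃ (A : ℕ → Profile n) (G : Finset (Fin n)),
      (∀ t i, (A t i).Nonempty) ∧ G.card = n / 2 ∧ Cohesive A 2 G 2 ∧
      2 * G.card / n = 1 ∧
      satAgainst (tsd (show 0 < n by omega) (Equiv.refl (Fin n)) χ) A A 2 G = 0 := by
  -- the upper half of the voters approve `1` throughout, while the dictators of rounds 0 and 1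
  -- lie in the lower half and approve only `0`
  set G : Finset (Fin n) := {i | n / 2 ≤ (i : ℕ)}
  have hG : G.card = n / 2 := by
    rw [Fin.card_filter_le_val (n / 2)]
    omega
  have hdictator (t : ℕ) (ht : t < 2) : t % n < n / 2 := by
    rw [Nat.mod_eq_of_lt (by omega)]
    omega
  refine ⟨splitProfile (n / 2), G, splitProfile_nonempty _, hG, ?_, ?_, ?_⟩
  · refine cohesive_range fun t _ => ⟨1, fun i hi => ?_⟩
    rw [splitProfile_of_le (Finset.mem_filter.mp hi).2]
    exact Finset.mem_singleton_self 1
  · rw [hG, Nat.div_eq_iff (by omega)]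
    omega
  · refine satAgainst_tsd_eq_zero _ _ hχ (fun t _ => splitProfile_nonempty _ _ _)
      fun t ht i hi => ?_
    rw [Equiv.refl_apply, splitProfile_of_lt (hdictator t ht),
      splitProfile_of_le (Finset.mem_filter.mp hi).2]
    decide
end
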